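/- Let g be smooth on Ω and let z ∈ C³(Ω) be a solution of Darboux's equation on Ω with |∇_g z|² < 1 everywhere on Ω. Then the symmetric tensor with components h_ij := g_ij − ∂_i z ∂_j z is a positive-definite Riemannian metric on Ω (i.e., h₁₁ > 0 and h₁₁h₂₂ − h₁₂² > 0 pointwise), and its Gaussian curvature (computed by the same formula, with the Christoffel symbols of h) vanishes identically on Ω. -/

import Mathlib

open Real Set Filter Topology

noncomputable section

/-- Partial derivative of `f : ℝ × ℝ → ℝ` in coordinate direction `i`. -/
def pd (i : Fin 2) (f : ℝ × ℝ → ℝ) (p : ℝ × ℝ) : ℝ :=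
  fderiv ℝ f p (if i = 0 then (1, 0) else (0, 1))

/-- The metric components as a 2×2 symmetric matrix of functions. -/
def gmat (g11 g12 g22 : ℝ × ℝ → ℝ) (i j : Fin 2) : ℝ × ℝ → ℝ :=
  if i = 0 then (if j = 0 then g11 else g12) else (if j = 0 then g12 else g22)

/-- The determinant of the metric. -/
def gdet (g11 g12 g22 : ℝ × ℝ → ℝ) (p : ℝ × ℝ) : ℝ :=
  g11 p * g22 p - g12 p ^ 2

/-- Components of the inverse metric. -/
def ginv (g11 g12 g22 : ℝ × ℝ → ℝ) (i j : Fin 2) (p : ℝ × ℝ) : ℝ :=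
  (if i = 0 then (if j = 0 then g22 p else -g12 p)
   else (if j = 0 then -g12 p else g11 p)) / gdet g11 g12 g22 p

/-- Christoffel symbols Γˡ_{ij}. -/
def Chr (g11 g12 g22 : ℝ × ℝ → ℝ) (l i j : Fin 2) (p : ℝ × ℝ) : ℝ :=
  (1 / 2) * ∑ m : Fin 2, ginv g11 g12 g22 l m p *
    (pd i (gmat g11 g12 g22 j m) p + pd j (gmat g11 g12 g22 i m) p
      - pd m (gmat g11 g12 g22 i j) p)

/-- Second covariant derivatives ∇_{ij} z. -/
def cov2 (g11 g12 g22 z : ℝ × ℝ → ℝ) (i j : Fin 2) (p : ℝ × ℝ) : ℝ :=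
  pd i (pd j z) p - ∑ l : Fin 2, Chr g11 g12 g22 l i j p * pd l z p

/-- |∇_g z|². -/
def gradSq (g11 g12 g22 z : ℝ × ℝ → ℝ) (p : ℝ × ℝ) : ℝ :=
  ∑ i : Fin 2, ∑ j : Fin 2, ginv g11 g12 g22 i j p * pd i z p * pd j z p

/-- The Gaussian curvature of the metric g. -/
def GaussK (g11 g12 g22 : ℝ × ℝ → ℝ) (p : ℝ × ℝ) : ℝ :=
  (1 / gdet g11 g12 g22 p) * ∑ i : Fin 2, gmat g11 g12 g22 0 i p *
    (pd 0 (Chr g11 g12 g22 i 1 1) p - pd 1 (Chr g11 g12 g22 i 0 1) p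
      + ∑ j : Fin 2, (Chr g11 g12 g22 j 1 1 p * Chr g11 g12 g22 i j 0 p
          - Chr g11 g12 g22 j 0 1 p * Chr g11 g12 g22 i j 1 p))

/-- Darboux's equation at a point p. -/
def DarbouxEq (g11 g12 g22 z : ℝ × ℝ → ℝ) (p : ℝ × ℝ) : Prop :=
  cov2 g11 g12 g22 z 0 0 p * cov2 g11 g12 g22 z 1 1 p
      - cov2 g11 g12 g22 z 0 1 p * cov2 g11 g12 g22 z 1 0 p
    = GaussK g11 g12 g22 p * gdet g11 g12 g22 p * (1 - gradSq g11 g12 g22 z p)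

/-- A smooth Riemannian metric on Ω. -/
def IsMetricOn (g11 g12 g22 : ℝ × ℝ → ℝ) (Ω : Set (ℝ × ℝ)) : Prop :=
  ContDiffOn ℝ (⊤ : ℕ∞) g11 Ω ∧ ContDiffOn ℝ (⊤ : ℕ∞) g12 Ω ∧ ContDiffOn ℝ (⊤ : ℕ∞) g22 Ω ∧
  ∀ p ∈ Ω, 0 < g11 p ∧ 0 < gdet g11 g12 g22 p

/-- The centers q_n = (1/n, 0). -/
def qpt (n : ℕ) : ℝ × ℝ := (1 / (n : ℝ), 0)

/-- Half-width of the square Xⁿ (whose width is 1/(2n(n+1))). -/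
def halfw (n : ℕ) : ℝ := 1 / (4 * (n : ℝ) * ((n : ℝ) + 1))

/-- The open axis-parallel square Xⁿ centered at q_n of width 1/(2n(n+1)). -/
def sqX (n : ℕ) : Set (ℝ × ℝ) :=
  {p | |p.1 - 1 / (n : ℝ)| < halfw n ∧ |p.2| < halfw n}

/-- The square X = (-1,1) × (-1,1). -/
def Xset : Set (ℝ × ℝ) := Ioo (-1 : ℝ) 1 ×ˢ Ioo (-1 : ℝ) 1

/-- φ is C^∞ on the closure of X, vanishes to infinite order on ∂X, and has a sign on X. -/
def PhiAdmissible (φ : ℝ × ℝ → ℝ) : Prop :=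
  ContDiffOn ℝ (⊤ : ℕ∞) φ (closure Xset) ∧
  (∀ k : ℕ, ∀ p ∈ frontier Xset, iteratedFDerivWithin ℝ k φ (closure Xset) p = 0) ∧
  ((∀ p ∈ Xset, 0 < φ p) ∨ (∀ p ∈ Xset, φ p < 0))

/-- K is obtained from φ and the sequence γ by the construction of the paper. -/
def Kconstr (φ : ℝ × ℝ → ℝ) (γ : ℕ → ℝ) (K : ℝ × ℝ → ℝ) : Prop :=
  (∀ n : ℕ, 1 ≤ n → ∀ q ∈ closure (sqX n),
      K q = γ n * φ ((4 * (n : ℝ) * ((n : ℝ) + 1)) • (q - qpt n))) ∧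
  (∀ q : ℝ × ℝ, q ∉ ⋃ n ∈ {m : ℕ | 1 ≤ m}, sqX n → K q = 0)

/-- Right vertical side +v_n of ∂Xⁿ. -/
def vSideR (n : ℕ) : Set (ℝ × ℝ) :=
  {p | p.1 = 1 / (n : ℝ) + halfw n ∧ |p.2| ≤ halfw n}

/-- Left vertical side -v_n of ∂Xⁿ. -/
def vSideL (n : ℕ) : Set (ℝ × ℝ) :=
  {p | p.1 = 1 / (n : ℝ) - halfw n ∧ |p.2| ≤ halfw n}

/-- Top horizontal side +h_n of ∂Xⁿ. -/
def hSideT (n : ℕ) : Set (ℝ × ℝ) :=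
  {p | p.2 = halfw n ∧ |p.1 - 1 / (n : ℝ)| ≤ halfw n}

/-- Bottom horizontal side -h_n of ∂Xⁿ. -/
def hSideB (n : ℕ) : Set (ℝ × ℝ) :=
  {p | p.2 = -halfw n ∧ |p.1 - 1 / (n : ℝ)| ≤ halfw n}

/-- At the point p there is a C³ change of coordinates Φ(x,y) = (x - p¹, s(x,y)) on a
neighborhood U ⊆ Ω of p, a C² function u and a positive continuous f on Φ(U), solving
∂_tt u + (K ∘ Φ⁻¹) ∂_ss u = (K ∘ Φ⁻¹) f on Φ(U). -/
def GoodChartAt (K : ℝ × ℝ → ℝ) (Ω : Set (ℝ × ℝ)) (p : ℝ × ℝ) : Prop :=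
  ∃ (U : Set (ℝ × ℝ)) (s : ℝ × ℝ → ℝ) (Ψ : ℝ × ℝ → ℝ × ℝ) (u f : ℝ × ℝ → ℝ),
    IsOpen U ∧ p ∈ U ∧ U ⊆ Ω ∧ ContDiffOn ℝ 3 s U ∧
    IsOpen ((fun q => (q.1 - p.1, s q)) '' U) ∧
    ContDiffOn ℝ 3 Ψ ((fun q => (q.1 - p.1, s q)) '' U) ∧
    (∀ q ∈ U, Ψ (q.1 - p.1, s q) = q) ∧
    (∀ w ∈ (fun q => (q.1 - p.1, s q)) '' U, ((Ψ w).1 - p.1, s (Ψ w)) = w) ∧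
    ContDiffOn ℝ 2 u ((fun q => (q.1 - p.1, s q)) '' U) ∧
    ContinuousOn f ((fun q => (q.1 - p.1, s q)) '' U) ∧
    (∀ w ∈ (fun q => (q.1 - p.1, s q)) '' U, 0 < f w) ∧
    (∀ w ∈ (fun q => (q.1 - p.1, s q)) '' U,
      pd 0 (pd 0 u) w + K (Ψ w) * pd 1 (pd 1 u) w = K (Ψ w) * f w)


lemma pd_congr_nhds {f g : ℝ × ℝ → ℝ} {p : ℝ × ℝ} (h : f =ᶠ[𝓝 p] g) (i : Fin 2) :
    pd i f p = pd i g p := by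
  unfold pd; rw [h.fderiv_eq]

lemma pd_add {f g : ℝ × ℝ → ℝ} {p : ℝ × ℝ} (hf : DifferentiableAt ℝ f p)
    (hg : DifferentiableAt ℝ g p) (i : Fin 2) :
    pd i (fun q => f q + g q) p = pd i f p + pd i g p := by
  unfold pd; rw [fderiv_fun_add hf hg]; rfl

lemma pd_sub {f g : ℝ × ℝ → ℝ} {p : ℝ × ℝ} (hf : DifferentiableAt ℝ f p)
    (hg : DifferentiableAt ℝ g p) (i : Fin 2) :
    pd i (fun q => f q - g q) p = pd i f p - pd i g p := by
  unfold pd; rw [fderiv_fun_sub hf hg]; rfl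

lemma pd_mul {f g : ℝ × ℝ → ℝ} {p : ℝ × ℝ} (hf : DifferentiableAt ℝ f p)
    (hg : DifferentiableAt ℝ g p) (i : Fin 2) :
    pd i (fun q => f q * g q) p = pd i f p * g p + f p * pd i g p := by
  unfold pd; rw [fderiv_fun_mul hf hg]; simp [mul_comm]; ring

lemma pd_const_mul {f : ℝ × ℝ → ℝ} {p : ℝ × ℝ} (hf : DifferentiableAt ℝ f p) (c : ℝ) (i : Fin 2) :
    pd i (fun q => c * f q) p = c * pd i f p := by
  unfold pd; rw [fderiv_const_mul hf]; rfl

lemma pd_sq {f : ℝ × ℝ → ℝ} {p : ℝ × ℝ} (hf : DifferentiableAt ℝ f p) (i : Fin 2) :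
    pd i (fun q => f q ^ 2) p = 2 * f p * pd i f p := by
  have : (fun q => f q ^ 2) = fun q => f q * f q := by funext q; ring
  rw [this, pd_mul hf hf]; ring

lemma pd_inv {g : ℝ × ℝ → ℝ} {p : ℝ × ℝ}
    (hg : DifferentiableAt ℝ g p) (hg0 : g p ≠ 0) (i : Fin 2) :
    pd i (fun q => (g q)⁻¹) p = -pd i g p / g p ^ 2 := by
  have h := ((hasFDerivAt_inv' (𝕜 := ℝ) hg0).comp p hg.hasFDerivAt).fderiv
  unfold pd
  rw [show (fun q => (g q)⁻¹) = (fun x : ℝ => x⁻¹) ∘ g from rfl, h]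
  simp only [ContinuousLinearMap.coe_comp', Function.comp_apply,
    ContinuousLinearMap.neg_apply, ContinuousLinearMap.mulLeftRight_apply]
  rw [eq_div_iff (pow_ne_zero 2 hg0)]
  field_simp

lemma pd_div {f g : ℝ × ℝ → ℝ} {p : ℝ × ℝ} (hf : DifferentiableAt ℝ f p)
    (hg : DifferentiableAt ℝ g p) (hg0 : g p ≠ 0) (i : Fin 2) :
    pd i (fun q => f q / g q) p = (pd i f p * g p - f p * pd i g p) / g p ^ 2 := by
  have e : (fun q => f q / g q) = fun q => f q * (g q)⁻¹ := by
    funext q; rw [div_eq_mul_inv]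
  rw [e, pd_mul hf (hg.fun_inv hg0), pd_inv hg hg0]
  field_simp
  ring

lemma pd_comm {f : ℝ × ℝ → ℝ} {p : ℝ × ℝ} (hf : ContDiffAt ℝ 2 f p) (i j : Fin 2) :
    pd i (pd j f) p = pd j (pd i f) p := by
  have hsymm := hf.isSymmSndFDerivAt (by norm_num)
  have hd : DifferentiableAt ℝ (fderiv ℝ f) p :=
    (hf.fderiv_right (m := 1) (by norm_num)).differentiableAt (by norm_num)
  have key : ∀ v w : ℝ × ℝ, fderiv ℝ (fun q => fderiv ℝ f q w) p v
      = fderiv ℝ (fderiv ℝ f) p v w := by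
    intro v w
    rw [fderiv_clm_apply hd (differentiableAt_const w)]
    simp
  unfold pd
  rw [key, key]
  exact hsymm _ _

lemma contDiffAt_pd2 {f : ℝ × ℝ → ℝ} {p : ℝ × ℝ} (hf : ContDiffAt ℝ 2 f p) (i : Fin 2) :
    ContDiffAt ℝ 1 (pd i f) p := by
  unfold pd
  exact (hf.fderiv_right (m := 1) (by norm_num)).clm_apply contDiffAt_const

lemma contDiffAt_pd3 {f : ℝ × ℝ → ℝ} {p : ℝ × ℝ} (hf : ContDiffAt ℝ 3 f p) (i : Fin 2) :
    ContDiffAt ℝ 2 (pd i f) p := by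
  unfold pd
  exact (hf.fderiv_right (m := 2) (by norm_num)).clm_apply contDiffAt_const

lemma pd_gdet {a b c : ℝ × ℝ → ℝ} {p : ℝ × ℝ} (da : DifferentiableAt ℝ a p)
    (db : DifferentiableAt ℝ b p) (dc : DifferentiableAt ℝ c p) (k : Fin 2) :
    pd k (gdet a b c) p = pd k a p * c p + a p * pd k c p - 2 * (b p * pd k b p) := by
  have e : gdet a b c = fun q => a q * c q - b q ^ 2 := rfl
  rw [e, pd_sub (da.fun_mul dc) (db.fun_pow 2), pd_mul da dc, pd_sq db]
  ring

lemma pd_comb3 {u1 v1 u2 v2 u3 v3 : ℝ × ℝ → ℝ} {p : ℝ × ℝ} (c1 c2 c3 : ℝ)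
    (hu1 : DifferentiableAt ℝ u1 p) (hv1 : DifferentiableAt ℝ v1 p)
    (hu2 : DifferentiableAt ℝ u2 p) (hv2 : DifferentiableAt ℝ v2 p)
    (hu3 : DifferentiableAt ℝ u3 p) (hv3 : DifferentiableAt ℝ v3 p) (i : Fin 2) :
    pd i (fun q => c1 * (u1 q * v1 q) + c2 * (u2 q * v2 q) + c3 * (u3 q * v3 q)) p
      = c1 * (pd i u1 p * v1 p + u1 p * pd i v1 p)
        + c2 * (pd i u2 p * v2 p + u2 p * pd i v2 p)
        + c3 * (pd i u3 p * v3 p + u3 p * pd i v3 p) := by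
  have h1 : DifferentiableAt ℝ (fun q => c1 * (u1 q * v1 q)) p := by fun_prop
  have h2 : DifferentiableAt ℝ (fun q => c2 * (u2 q * v2 q)) p := by fun_prop
  have h3 : DifferentiableAt ℝ (fun q => c3 * (u3 q * v3 q)) p := by fun_prop
  rw [pd_add (h1.fun_add h2) h3, pd_add h1 h2,
      pd_const_mul (hu1.fun_mul hv1), pd_const_mul (hu2.fun_mul hv2), pd_const_mul (hu3.fun_mul hv3),
      pd_mul hu1 hv1, pd_mul hu2 hv2, pd_mul hu3 hv3]

lemma assembleK {ap bp D s1 s2 s3 s4 n000 n100 n001 n101 n011 n111 g0 g1 NK : ℝ} (hD : D ≠ 0)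
    (hNK : NK = ap * ((s1*D - n011*g0) - (s2*D - n001*g1)
          + ((n011*n000 - n001*n001) + (n111*n001 - n101*n011)))
        + bp * ((s3*D - n111*g0) - (s4*D - n101*g1)
          + ((n011*n100 - n001*n101) + (n111*n101 - n101*n111)))) :
    (1/D) * (ap * ((s1*D - n011*g0)/D^2 - (s2*D - n001*g1)/D^2
          + ((n011/D*(n000/D) - n001/D*(n001/D)) + (n111/D*(n001/D) - n101/D*(n011/D))))
        + bp * ((s3*D - n111*g0)/D^2 - (s4*D - n101*g1)/D^2
          + ((n011/D*(n100/D) - n001/D*(n101/D)) + (n111/D*(n101/D) - n101/D*(n111/D)))))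
      = NK / D^3 := by
  subst hNK
  field_simp

set_option maxHeartbeats 2000000 in

lemma gaussK_eq (a b c : ℝ × ℝ → ℝ) (p : ℝ × ℝ)
    (ha : ContDiffAt ℝ 2 a p) (hb : ContDiffAt ℝ 2 b p) (hc : ContDiffAt ℝ 2 c p)
    (hdet : gdet a b c p ≠ 0) :
    GaussK a b c p = (- (1/4 : ℝ) * (b p) * (b p) * (c p) * (pd 1 a p) * (pd 1 a p) - (1/4 : ℝ) * (b p) * (b p) * (c p) * (pd 0 a p) * (pd 0 c p) + (1/2 : ℝ) * (b p) * (b p) * (c p) * (pd 0 a p) * (pd 1 b p) + (1/2 : ℝ) * (b p) * (b p) * (b p) * (pd 0 b p) * (pd 0 c p) - (b p) * (b p) * (b p) * (pd 0 b p) * (pd 1 b p) + (1/4 : ℝ) * (b p) * (b p) * (b p) * (pd 1 a p) * (pd 0 c p) + (1/2 : ℝ) * (b p) * (b p) * (b p) * (pd 1 a p) * (pd 1 b p) - (1/4 : ℝ) * (b p) * (b p) * (b p) * (pd 0 a p) * (pd 1 c p) - (1/2 : ℝ) * (b p) * (b p) * (b p) * (b p) * (pd 0 (pd 0 c) p) +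 (b p) * (b p) * (b p) * (b p) * (pd 0 (pd 1 b) p) - (1/2 : ℝ) * (b p) * (b p) * (b p) * (b p) * (pd 1 (pd 1 a) p) + (1/4 : ℝ) * (a p) * (c p) * (c p) * (pd 1 a p) * (pd 1 a p) + (1/4 : ℝ) * (a p) * (c p) * (c p) * (pd 0 a p) * (pd 0 c p) - (1/2 : ℝ) * (a p) * (c p) * (c p) * (pd 0 a p) * (pd 1 b p) - (1/2 : ℝ) * (a p) * (b p) * (c p) * (pd 0 b p) * (pd 0 c p) + (a p) * (b p) * (c p) * (pd 0 b p) * (pd 1 b p) - (1/4 : ℝ) * (a p) * (b p) * (c p) * (pd 1 a p) * (pd 0 c p) - (1/2 : ℝ) * (a p) * (b p) * (c p) * (pd 1 a p) * (pd 1 b p) + (1/4 : ℝ) * (a p) * (b p) * (c p) * (pd 0 a p) * (pd 1 c p) - (1/4 : ℝ) * (a p) * (b p) * (b p) * (pd 0 c p) * (pd 0 c p) + (1/2 : ℝ) * (a p) * (b p) * (b p) * (pd 0 b p) * (pd 1 c p) - (1/4 : ℝ) * (a p) * (b p) * (b p) * (pd 1 a p) * (pd 1 c p) + (a p) * (b p)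 * (b p) * (c p) * (pd 0 (pd 0 c) p) - 2 * (a p) * (b p) * (b p) * (c p) * (pd 0 (pd 1 b) p) + (a p) * (b p) * (b p) * (c p) * (pd 1 (pd 1 a) p) + (1/4 : ℝ) * (a p) * (a p) * (c p) * (pd 0 c p) * (pd 0 c p) - (1/2 : ℝ) * (a p) * (a p) * (c p) * (pd 0 b p) * (pd 1 c p) + (1/4 : ℝ) * (a p) * (a p) * (c p) * (pd 1 a p) * (pd 1 c p) - (1/2 : ℝ) * (a p) * (a p) * (c p) * (c p) * (pd 0 (pd 0 c) p) + (a p) * (a p) * (c p) * (c p) * (pd 0 (pd 1 b) p) - (1/2 : ℝ) * (a p) * (a p) * (c p) * (c p) * (pd 1 (pd 1 a) p)) / gdet a b c p ^ 3 := by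
  have da : DifferentiableAt ℝ a p := ha.differentiableAt (by norm_num)
  have db : DifferentiableAt ℝ b p := hb.differentiableAt (by norm_num)
  have dc : DifferentiableAt ℝ c p := hc.differentiableAt (by norm_num)
  have d0a : DifferentiableAt ℝ (pd 0 a) p := (contDiffAt_pd2 ha 0).differentiableAt (by norm_num)
  have d1a : DifferentiableAt ℝ (pd 1 a) p := (contDiffAt_pd2 ha 1).differentiableAt (by norm_num)
  have d0b : DifferentiableAt ℝ (pd 0 b) p := (contDiffAt_pd2 hb 0).differentiableAt (by norm_num)
  have d1b : DifferentiableAt ℝ (pd 1 b) p := (contDiffAt_pd2 hb 1).differentiableAt (by norm_num)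
  have d0c : DifferentiableAt ℝ (pd 0 c) p := (contDiffAt_pd2 hc 0).differentiableAt (by norm_num)
  have d1c : DifferentiableAt ℝ (pd 1 c) p := (contDiffAt_pd2 hc 1).differentiableAt (by norm_num)
  have hdg : DifferentiableAt ℝ (gdet a b c) p := by
    have e : gdet a b c = fun q => a q * c q - b q ^ 2 := rfl
    rw [e]; fun_prop
  have hv000 : Chr a b c 0 0 0 p = ((1/2 : ℝ) * (c p * (pd 0 a) p) + (-1 : ℝ) * (b p * (pd 0 b) p) + (1/2 : ℝ) * (b p * (pd 1 a) p)) / gdet a b c p := by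
    simp [Chr, ginv, gmat, Fin.sum_univ_two]; ring
  have hv001 : Chr a b c 0 0 1 p = ((1/2 : ℝ) * (c p * (pd 1 a) p) + (-(1/2) : ℝ) * (b p * (pd 0 c) p) + (0 : ℝ) * (a p * (pd 0 a) p)) / gdet a b c p := by
    simp [Chr, ginv, gmat, Fin.sum_univ_two]; ring
  have hv010 : Chr a b c 0 1 0 p = ((1/2 : ℝ) * (c p * (pd 1 a) p) + (-(1/2) : ℝ) * (b p * (pd 0 c) p) + (0 : ℝ) * (a p * (pd 0 a) p)) / gdet a b c p := by
    simp [Chr, ginv, gmat, Fin.sum_univ_two]; ring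
  have hv011 : Chr a b c 0 1 1 p = ((-(1/2) : ℝ) * (c p * (pd 0 c) p) + (1 : ℝ) * (c p * (pd 1 b) p) + (-(1/2) : ℝ) * (b p * (pd 1 c) p)) / gdet a b c p := by
    simp [Chr, ginv, gmat, Fin.sum_univ_two]; ring
  have hv100 : Chr a b c 1 0 0 p = ((-(1/2) : ℝ) * (b p * (pd 0 a) p) + (1 : ℝ) * (a p * (pd 0 b) p) + (-(1/2) : ℝ) * (a p * (pd 1 a) p)) / gdet a b c p := by
    simp [Chr, ginv, gmat, Fin.sum_univ_two]; ring
  have hv101 : Chr a b c 1 0 1 p = ((-(1/2) : ℝ) * (b p * (pd 1 a) p) + (1/2 : ℝ) * (a p * (pd 0 c) p) + (0 : ℝ) * (a p * (pd 0 a) p)) / gdet a b c p := by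
    simp [Chr, ginv, gmat, Fin.sum_univ_two]; ring
  have hv110 : Chr a b c 1 1 0 p = ((-(1/2) : ℝ) * (b p * (pd 1 a) p) + (1/2 : ℝ) * (a p * (pd 0 c) p) + (0 : ℝ) * (a p * (pd 0 a) p)) / gdet a b c p := by
    simp [Chr, ginv, gmat, Fin.sum_univ_two]; ring
  have hv111 : Chr a b c 1 1 1 p = ((1/2 : ℝ) * (b p * (pd 0 c) p) + (-1 : ℝ) * (b p * (pd 1 b) p) + (1/2 : ℝ) * (a p * (pd 1 c) p)) / gdet a b c p := by
    simp [Chr, ginv, gmat, Fin.sum_univ_two]; ring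
  have hCf001 : Chr a b c 0 0 1 = fun q => ((1/2 : ℝ) * (c q * (pd 1 a) q) + (-(1/2) : ℝ) * (b q * (pd 0 c) q) + (0 : ℝ) * (a q * (pd 0 a) q)) / gdet a b c q := by
    funext q; simp [Chr, ginv, gmat, Fin.sum_univ_two]; ring
  have dN001 : DifferentiableAt ℝ (fun q => (1/2 : ℝ) * (c q * (pd 1 a) q) + (-(1/2) : ℝ) * (b q * (pd 0 c) q) + (0 : ℝ) * (a q * (pd 0 a) q)) p := by fun_prop
  have hCf101 : Chr a b c 1 0 1 = fun q => ((-(1/2) : ℝ) * (b q * (pd 1 a) q) + (1/2 : ℝ) * (a q * (pd 0 c) q) + (0 : ℝ) * (a q * (pd 0 a) q)) / gdet a b c q := by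
    funext q; simp [Chr, ginv, gmat, Fin.sum_univ_two]; ring
  have dN101 : DifferentiableAt ℝ (fun q => (-(1/2) : ℝ) * (b q * (pd 1 a) q) + (1/2 : ℝ) * (a q * (pd 0 c) q) + (0 : ℝ) * (a q * (pd 0 a) q)) p := by fun_prop
  have hCf011 : Chr a b c 0 1 1 = fun q => ((-(1/2) : ℝ) * (c q * (pd 0 c) q) + (1 : ℝ) * (c q * (pd 1 b) q) + (-(1/2) : ℝ) * (b q * (pd 1 c) q)) / gdet a b c q := by
    funext q; simp [Chr, ginv, gmat, Fin.sum_univ_two]; ring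
  have dN011 : DifferentiableAt ℝ (fun q => (-(1/2) : ℝ) * (c q * (pd 0 c) q) + (1 : ℝ) * (c q * (pd 1 b) q) + (-(1/2) : ℝ) * (b q * (pd 1 c) q)) p := by fun_prop
  have hCf111 : Chr a b c 1 1 1 = fun q => ((1/2 : ℝ) * (b q * (pd 0 c) q) + (-1 : ℝ) * (b q * (pd 1 b) q) + (1/2 : ℝ) * (a q * (pd 1 c) q)) / gdet a b c q := by
    funext q; simp [Chr, ginv, gmat, Fin.sum_univ_two]; ring
  have dN111 : DifferentiableAt ℝ (fun q => (1/2 : ℝ) * (b q * (pd 0 c) q) + (-1 : ℝ) * (b q * (pd 1 b) q) + (1/2 : ℝ) * (a q * (pd 1 c) q)) p := by fun_prop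
  simp only [GaussK, Fin.sum_univ_two, show gmat a b c 0 0 = a from rfl, show gmat a b c 0 1 = b from rfl]
  rw [hv000, hv100, hv010, hv110, hv001, hv101, hv011, hv111]
  rw [hCf001, hCf101, hCf011, hCf111]
  rw [pd_div dN011 hdg hdet 0, pd_div dN111 hdg hdet 0, pd_div dN001 hdg hdet 1, pd_div dN101 hdg hdet 1]
  rw [pd_comb3 (-(1/2) : ℝ) (1 : ℝ) (-(1/2) : ℝ) dc d0c dc d1b db d1c 0]
  rw [pd_comb3 (1/2 : ℝ) (-1 : ℝ) (1/2 : ℝ) db d0c db d1b da d1c 0]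
  rw [pd_comb3 (1/2 : ℝ) (-(1/2) : ℝ) (0 : ℝ) dc d1a db d0c da d0a 1]
  rw [pd_comb3 (-(1/2) : ℝ) (1/2 : ℝ) (0 : ℝ) db d1a da d0c da d0a 1]
  rw [pd_gdet da db dc 0, pd_gdet da db dc 1]
  rw [pd_comm hc 1 0]
  beta_reduce
  refine assembleK hdet ?_
  simp only [gdet]
  ring

lemma div_mul_div_sub (X Y Z D : ℝ) :
    X / D * (Y / D) - Z / D * (Z / D) = (X * Y - Z * Z) / D ^ 2 := by
  rw [div_mul_div_comm, div_mul_div_comm, div_sub_div_same, pow_two]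

lemma eR_lemma (NK W D : ℝ) (hD : D ≠ 0) :
    NK / D ^ 3 * D * (1 - W / D) = NK * (D - W) / D ^ 3 := by
  field_simp

lemma pd2_sub_mul {g u v : ℝ × ℝ → ℝ} {p : ℝ × ℝ} {U : Set (ℝ × ℝ)} (hU : IsOpen U) (hpU : p ∈ U)
    (hg : ∀ q ∈ U, ContDiffAt ℝ 2 g q) (hu : ∀ q ∈ U, ContDiffAt ℝ 2 u q)
    (hv : ∀ q ∈ U, ContDiffAt ℝ 2 v q) (k m : Fin 2) :
    pd k (pd m (fun q => g q - u q * v q)) p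
      = pd k (pd m g) p - (pd k (pd m u) p * v p + pd m u p * pd k v p
          + (pd k u p * pd m v p + u p * pd k (pd m v) p)) := by
  have hev : pd m (fun q => g q - u q * v q) =ᶠ[𝓝 p]
      fun q => pd m g q - (pd m u q * v q + u q * pd m v q) := by
    filter_upwards [hU.mem_nhds hpU] with q hq
    have dgq := (hg q hq).differentiableAt (by norm_num)
    have duq := (hu q hq).differentiableAt (by norm_num)
    have dvq := (hv q hq).differentiableAt (by norm_num)
    rw [pd_sub dgq (duq.fun_mul dvq), pd_mul duq dvq]
  rw [pd_congr_nhds hev k]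
  have dg2 := (contDiffAt_pd2 (hg p hpU) m).differentiableAt (by norm_num)
  have du2 := (contDiffAt_pd2 (hu p hpU) m).differentiableAt (by norm_num)
  have dv2 := (contDiffAt_pd2 (hv p hpU) m).differentiableAt (by norm_num)
  have du := (hu p hpU).differentiableAt (by norm_num)
  have dv := (hv p hpU).differentiableAt (by norm_num)
  rw [pd_sub dg2 ((du2.fun_mul dv).fun_add (du.fun_mul dv2)), pd_add (du2.fun_mul dv) (du.fun_mul dv2),
      pd_mul du2 dv, pd_mul du dv2]

set_option maxHeartbeats 4000000 in
theorem induced_metric_flat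
    (Ω : Set (ℝ × ℝ)) (hΩ : IsOpen Ω)
    (g11 g12 g22 : ℝ × ℝ → ℝ) (hg : IsMetricOn g11 g12 g22 Ω)
    (z : ℝ × ℝ → ℝ) (hz : ContDiffOn ℝ 3 z Ω)
    (hD : ∀ p ∈ Ω, DarbouxEq g11 g12 g22 z p)
    (hgrad : ∀ p ∈ Ω, gradSq g11 g12 g22 z p < 1) :
    ∀ p ∈ Ω,
      0 < g11 p - (pd 0 z p) ^ 2 ∧
      0 < gdet (fun q => g11 q - (pd 0 z q) ^ 2) (fun q => g12 q - pd 0 z q * pd 1 z q)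
            (fun q => g22 q - (pd 1 z q) ^ 2) p ∧
      GaussK (fun q => g11 q - (pd 0 z q) ^ 2) (fun q => g12 q - pd 0 z q * pd 1 z q)
        (fun q => g22 q - (pd 1 z q) ^ 2) p = 0 := by
  obtain ⟨sg11, sg12, sg22, hpos⟩ := hg
  intro p hp
  have hmem : Ω ∈ 𝓝 p := hΩ.mem_nhds hp
  have ca : ContDiffAt ℝ 2 g11 p := (sg11.contDiffAt hmem).of_le (WithTop.coe_le_coe.mpr le_top)
  have cb : ContDiffAt ℝ 2 g12 p := (sg12.contDiffAt hmem).of_le (WithTop.coe_le_coe.mpr le_top)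
  have cc : ContDiffAt ℝ 2 g22 p := (sg22.contDiffAt hmem).of_le (WithTop.coe_le_coe.mpr le_top)
  have cz : ContDiffAt ℝ 3 z p := hz.contDiffAt hmem
  have cz2 : ContDiffAt ℝ 2 z p := cz.of_le (by norm_num)
  have cz0 : ContDiffAt ℝ 2 (pd 0 z) p := contDiffAt_pd3 cz 0
  have cz1 : ContDiffAt ℝ 2 (pd 1 z) p := contDiffAt_pd3 cz 1
  have dz0 : DifferentiableAt ℝ (pd 0 z) p := cz0.differentiableAt (by norm_num)
  have dz1 : DifferentiableAt ℝ (pd 1 z) p := cz1.differentiableAt (by norm_num)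
  have hDg : 0 < gdet g11 g12 g22 p := (hpos p hp).2
  have hApos : 0 < g11 p := (hpos p hp).1
  have hDne0 : gdet g11 g12 g22 p ≠ 0 := ne_of_gt hDg
  have hQ : gradSq g11 g12 g22 z p = (g22 p * pd 0 z p ^ 2 - 2 * g12 p * pd 0 z p * pd 1 z p + g11 p * pd 1 z p ^ 2) / gdet g11 g12 g22 p := by
    simp [gradSq, ginv, Fin.sum_univ_two]; ring
  have hQlt := hgrad p hp
  rw [hQ] at hQlt
  have hW : (g22 p * pd 0 z p ^ 2 - 2 * g12 p * pd 0 z p * pd 1 z p + g11 p * pd 1 z p ^ 2) < gdet g11 g12 g22 p := (div_lt_one hDg).mp hQlt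
  have hW' : (g22 p * pd 0 z p ^ 2 - 2 * g12 p * pd 0 z p * pd 1 z p + g11 p * pd 1 z p ^ 2) < g11 p * g22 p - g12 p ^ 2 := by simpa [gdet] using hW
  have key1 : gdet g11 g12 g22 p * (g11 p - pd 0 z p ^ 2)
      = g11 p * (gdet g11 g12 g22 p - (g22 p * pd 0 z p ^ 2 - 2 * g12 p * pd 0 z p * pd 1 z p + g11 p * pd 1 z p ^ 2))
        + (g12 p * pd 0 z p - g11 p * pd 1 z p) ^ 2 := by
    simp only [gdet]; ring
  have part1 : 0 < g11 p - pd 0 z p ^ 2 := by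
    have h1 : 0 < gdet g11 g12 g22 p * (g11 p - pd 0 z p ^ 2) := by
      rw [key1]
      have := mul_pos hApos (sub_pos.mpr hW)
      nlinarith [sq_nonneg (g12 p * pd 0 z p - g11 p * pd 1 z p)]
    nlinarith [h1, hDg]
  have part2 : 0 < gdet (fun q => g11 q - (pd 0 z q) ^ 2) (fun q => g12 q - pd 0 z q * pd 1 z q)
      (fun q => g22 q - (pd 1 z q) ^ 2) p := by
    have e2 : gdet (fun q => g11 q - (pd 0 z q) ^ 2) (fun q => g12 q - pd 0 z q * pd 1 z q)
        (fun q => g22 q - (pd 1 z q) ^ 2) p = (g11 p * g22 p - g12 p ^ 2) - (g22 p * pd 0 z p ^ 2 - 2 * g12 p * pd 0 z p * pd 1 z p + g11 p * pd 1 z p ^ 2) := by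
      simp only [gdet]; ring
    rw [e2]; linarith [hW']
  refine ⟨part1, part2, ?_⟩
  have hv000 : Chr g11 g12 g22 0 0 0 p = ((1/2 : ℝ) * (g22 p * (pd 0 g11) p) + (-1 : ℝ) * (g12 p * (pd 0 g12) p) + (1/2 : ℝ) * (g12 p * (pd 1 g11) p)) / gdet g11 g12 g22 p := by
    simp [Chr, ginv, gmat, Fin.sum_univ_two]; ring
  have hv001 : Chr g11 g12 g22 0 0 1 p = ((1/2 : ℝ) * (g22 p * (pd 1 g11) p) + (-(1/2) : ℝ) * (g12 p * (pd 0 g22) p) + (0 : ℝ) * (g11 p * (pd 0 g11) p)) / gdet g11 g12 g22 p := by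
    simp [Chr, ginv, gmat, Fin.sum_univ_two]; ring
  have hv010 : Chr g11 g12 g22 0 1 0 p = ((1/2 : ℝ) * (g22 p * (pd 1 g11) p) + (-(1/2) : ℝ) * (g12 p * (pd 0 g22) p) + (0 : ℝ) * (g11 p * (pd 0 g11) p)) / gdet g11 g12 g22 p := by
    simp [Chr, ginv, gmat, Fin.sum_univ_two]; ring
  have hv011 : Chr g11 g12 g22 0 1 1 p = ((-(1/2) : ℝ) * (g22 p * (pd 0 g22) p) + (1 : ℝ) * (g22 p * (pd 1 g12) p) + (-(1/2) : ℝ) * (g12 p * (pd 1 g22) p)) / gdet g11 g12 g22 p := by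
    simp [Chr, ginv, gmat, Fin.sum_univ_two]; ring
  have hv100 : Chr g11 g12 g22 1 0 0 p = ((-(1/2) : ℝ) * (g12 p * (pd 0 g11) p) + (1 : ℝ) * (g11 p * (pd 0 g12) p) + (-(1/2) : ℝ) * (g11 p * (pd 1 g11) p)) / gdet g11 g12 g22 p := by
    simp [Chr, ginv, gmat, Fin.sum_univ_two]; ring
  have hv101 : Chr g11 g12 g22 1 0 1 p = ((-(1/2) : ℝ) * (g12 p * (pd 1 g11) p) + (1/2 : ℝ) * (g11 p * (pd 0 g22) p) + (0 : ℝ) * (g11 p * (pd 0 g11) p)) / gdet g11 g12 g22 p := by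
    simp [Chr, ginv, gmat, Fin.sum_univ_two]; ring
  have hv110 : Chr g11 g12 g22 1 1 0 p = ((-(1/2) : ℝ) * (g12 p * (pd 1 g11) p) + (1/2 : ℝ) * (g11 p * (pd 0 g22) p) + (0 : ℝ) * (g11 p * (pd 0 g11) p)) / gdet g11 g12 g22 p := by
    simp [Chr, ginv, gmat, Fin.sum_univ_two]; ring
  have hv111 : Chr g11 g12 g22 1 1 1 p = ((1/2 : ℝ) * (g12 p * (pd 0 g22) p) + (-1 : ℝ) * (g12 p * (pd 1 g12) p) + (1/2 : ℝ) * (g11 p * (pd 1 g22) p)) / gdet g11 g12 g22 p := by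
    simp [Chr, ginv, gmat, Fin.sum_univ_two]; ring
  have hswap : pd 1 (pd 0 z) =ᶠ[𝓝 p] pd 0 (pd 1 z) := by
    filter_upwards [hΩ.mem_nhds hp] with q hq
    exact pd_comm ((hz.contDiffAt (hΩ.mem_nhds hq)).of_le (by norm_num)) 1 0
  have e_c : pd 1 (pd 0 z) p = pd 0 (pd 1 z) p := pd_comm cz2 1 0
  have e_a : pd 0 (pd 1 (pd 0 z)) p = pd 0 (pd 0 (pd 1 z)) p := pd_congr_nhds hswap 0
  have e_b : pd 1 (pd 1 (pd 0 z)) p = pd 0 (pd 1 (pd 1 z)) p := by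
    rw [pd_congr_nhds hswap 1]; exact pd_comm cz1 1 0
  have hDar : cov2 g11 g12 g22 z 0 0 p * cov2 g11 g12 g22 z 1 1 p
      - cov2 g11 g12 g22 z 0 1 p * cov2 g11 g12 g22 z 1 0 p
    = GaussK g11 g12 g22 p * gdet g11 g12 g22 p * (1 - gradSq g11 g12 g22 z p) := hD p hp
  simp only [cov2, Fin.sum_univ_two] at hDar
  rw [hv000, hv100, hv011, hv111, hv001, hv101, hv010, hv110, e_c] at hDar
  rw [gaussK_eq g11 g12 g22 p ca cb cc hDne0, hQ] at hDar
  have ecov00 : pd 0 (pd 0 z) p - (((1/2 : ℝ) * (g22 p * (pd 0 g11) p) + (-1 : ℝ) * (g12 p * (pd 0 g12) p) + (1/2 : ℝ) * (g12 p * (pd 1 g11) p)) / gdet g11 g12 g22 p * pd 0 z p + ((-(1/2) : ℝ) * (g12 p * (pd 0 g11) p) + (1 : ℝ) * (g11 p * (pd 0 g12) p) + (-(1/2) : ℝ) * (g11 p * (pd 1 g11) p)) / gdet g11 g12 g22 p * pd 1 z p)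
      = (pd 0 (pd 0 z) p * gdet g11 g12 g22 p - (((1/2 : ℝ) * (g22 p * (pd 0 g11) p) + (-1 : ℝ) * (g12 p * (pd 0 g12) p) + (1/2 : ℝ) * (g12 p * (pd 1 g11) p)) * pd 0 z p + ((-(1/2) : ℝ) * (g12 p * (pd 0 g11) p) + (1 : ℝ) * (g11 p * (pd 0 g12) p) + (-(1/2) : ℝ) * (g11 p * (pd 1 g11) p)) * pd 1 z p)) / gdet g11 g12 g22 p := by
    field_simp
  have ecov11 : pd 1 (pd 1 z) p - (((-(1/2) : ℝ) * (g22 p * (pd 0 g22) p) + (1 : ℝ) * (g22 p * (pd 1 g12) p) + (-(1/2) : ℝ) * (g12 p * (pd 1 g22) p)) / gdet g11 g12 g22 p * pd 0 z p + ((1/2 : ℝ) * (g12 p * (pd 0 g22) p) + (-1 : ℝ) * (g12 p * (pd 1 g12) p) + (1/2 : ℝ) * (g11 p * (pd 1 g22) p)) / gdet g11 g12 g22 p * pd 1 z p)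
      = (pd 1 (pd 1 z) p * gdet g11 g12 g22 p - (((-(1/2) : ℝ) * (g22 p * (pd 0 g22) p) + (1 : ℝ) * (g22 p * (pd 1 g12) p) + (-(1/2) : ℝ) * (g12 p * (pd 1 g22) p)) * pd 0 z p + ((1/2 : ℝ) * (g12 p * (pd 0 g22) p) + (-1 : ℝ) * (g12 p * (pd 1 g12) p) + (1/2 : ℝ) * (g11 p * (pd 1 g22) p)) * pd 1 z p)) / gdet g11 g12 g22 p := by
    field_simp
  have ecov01 : pd 0 (pd 1 z) p - (((1/2 : ℝ) * (g22 p * (pd 1 g11) p) + (-(1/2) : ℝ) * (g12 p * (pd 0 g22) p) + (0 : ℝ) * (g11 p * (pd 0 g11) p)) / gdet g11 g12 g22 p * pd 0 z p + ((-(1/2) : ℝ) * (g12 p * (pd 1 g11) p) + (1/2 : ℝ) * (g11 p * (pd 0 g22) p) + (0 : ℝ) * (g11 p * (pd 0 g11) p)) / gdet g11 g12 g22 p * pd 1 z p)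
      = (pd 0 (pd 1 z) p * gdet g11 g12 g22 p - (((1/2 : ℝ) * (g22 p * (pd 1 g11) p) + (-(1/2) : ℝ) * (g12 p * (pd 0 g22) p) + (0 : ℝ) * (g11 p * (pd 0 g11) p)) * pd 0 z p + ((-(1/2) : ℝ) * (g12 p * (pd 1 g11) p) + (1/2 : ℝ) * (g11 p * (pd 0 g22) p) + (0 : ℝ) * (g11 p * (pd 0 g11) p)) * pd 1 z p)) / gdet g11 g12 g22 p := by
    field_simp
  rw [ecov00, ecov11, ecov01, div_mul_div_sub, eR_lemma _ _ _ hDne0] at hDar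
  have hP0 := (div_eq_div_iff (pow_ne_zero 2 hDne0) (pow_ne_zero 3 hDne0)).mp hDar
  simp only [gdet] at hP0
  have eAfun : (fun q => g11 q - (pd 0 z q) ^ 2) = (fun q => g11 q - pd 0 z q * pd 0 z q) := by
    funext q; rw [sq]
  have eCfun : (fun q => g22 q - (pd 1 z q) ^ 2) = (fun q => g22 q - pd 1 z q * pd 1 z q) := by
    funext q; rw [sq]
  rw [eAfun, eCfun]
  have cA : ContDiffAt ℝ 2 (fun q => g11 q - pd 0 z q * pd 0 z q) p := ca.sub (cz0.mul cz0)
  have cB : ContDiffAt ℝ 2 (fun q => g12 q - pd 0 z q * pd 1 z q) p := cb.sub (cz0.mul cz1)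
  have cC : ContDiffAt ℝ 2 (fun q => g22 q - pd 1 z q * pd 1 z q) p := cc.sub (cz1.mul cz1)
  have hDh : (0:ℝ) < gdet (fun q => g11 q - pd 0 z q * pd 0 z q) (fun q => g12 q - pd 0 z q * pd 1 z q)
      (fun q => g22 q - pd 1 z q * pd 1 z q) p := by
    have e2 : gdet (fun q => g11 q - pd 0 z q * pd 0 z q) (fun q => g12 q - pd 0 z q * pd 1 z q)
        (fun q => g22 q - pd 1 z q * pd 1 z q) p = (g11 p * g22 p - g12 p ^ 2) - (g22 p * pd 0 z p ^ 2 - 2 * g12 p * pd 0 z p * pd 1 z p + g11 p * pd 1 z p ^ 2) := by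
      simp only [gdet]; ring
    rw [e2]; linarith [hW']
  rw [gaussK_eq _ _ _ p cA cB cC (ne_of_gt hDh), div_eq_zero_iff]
  refine Or.inl ?_
  have dg11 : DifferentiableAt ℝ g11 p := ca.differentiableAt (by norm_num)
  have dg12 : DifferentiableAt ℝ g12 p := cb.differentiableAt (by norm_num)
  have dg22 : DifferentiableAt ℝ g22 p := cc.differentiableAt (by norm_num)
  have hUz : ∀ q ∈ Ω, ContDiffAt ℝ 2 (pd 0 z) q := fun q hq => contDiffAt_pd3 (hz.contDiffAt (hΩ.mem_nhds hq)) 0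
  have hUz1 : ∀ q ∈ Ω, ContDiffAt ℝ 2 (pd 1 z) q := fun q hq => contDiffAt_pd3 (hz.contDiffAt (hΩ.mem_nhds hq)) 1
  have hUg11 : ∀ q ∈ Ω, ContDiffAt ℝ 2 g11 q := fun q hq => (sg11.contDiffAt (hΩ.mem_nhds hq)).of_le (WithTop.coe_le_coe.mpr le_top)
  have hUg12 : ∀ q ∈ Ω, ContDiffAt ℝ 2 g12 q := fun q hq => (sg12.contDiffAt (hΩ.mem_nhds hq)).of_le (WithTop.coe_le_coe.mpr le_top)
  have hUg22 : ∀ q ∈ Ω, ContDiffAt ℝ 2 g22 q := fun q hq => (sg22.contDiffAt (hΩ.mem_nhds hq)).of_le (WithTop.coe_le_coe.mpr le_top)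
  have hA22 := pd2_sub_mul hΩ hp hUg11 hUz hUz 1 1
  have hB12 := pd2_sub_mul hΩ hp hUg12 hUz hUz1 0 1
  have hC11 := pd2_sub_mul hΩ hp hUg22 hUz1 hUz1 0 0
  have hA0 : pd 0 (fun q => g11 q - pd 0 z q * pd 0 z q) p = pd 0 g11 p - (pd 0 (pd 0 z) p * pd 0 z p + pd 0 z p * pd 0 (pd 0 z) p) := by
    rw [pd_sub dg11 (dz0.fun_mul dz0), pd_mul dz0 dz0]
  have hA1 : pd 1 (fun q => g11 q - pd 0 z q * pd 0 z q) p = pd 1 g11 p - (pd 1 (pd 0 z) p * pd 0 z p + pd 0 z p * pd 1 (pd 0 z) p) := by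
    rw [pd_sub dg11 (dz0.fun_mul dz0), pd_mul dz0 dz0]
  have hB0 : pd 0 (fun q => g12 q - pd 0 z q * pd 1 z q) p = pd 0 g12 p - (pd 0 (pd 0 z) p * pd 1 z p + pd 0 z p * pd 0 (pd 1 z) p) := by
    rw [pd_sub dg12 (dz0.fun_mul dz1), pd_mul dz0 dz1]
  have hB1 : pd 1 (fun q => g12 q - pd 0 z q * pd 1 z q) p = pd 1 g12 p - (pd 1 (pd 0 z) p * pd 1 z p + pd 0 z p * pd 1 (pd 1 z) p) := by
    rw [pd_sub dg12 (dz0.fun_mul dz1), pd_mul dz0 dz1]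
  have hC0 : pd 0 (fun q => g22 q - pd 1 z q * pd 1 z q) p = pd 0 g22 p - (pd 0 (pd 1 z) p * pd 1 z p + pd 1 z p * pd 0 (pd 1 z) p) := by
    rw [pd_sub dg22 (dz1.fun_mul dz1), pd_mul dz1 dz1]
  have hC1 : pd 1 (fun q => g22 q - pd 1 z q * pd 1 z q) p = pd 1 g22 p - (pd 1 (pd 1 z) p * pd 1 z p + pd 1 z p * pd 1 (pd 1 z) p) := by
    rw [pd_sub dg22 (dz1.fun_mul dz1), pd_mul dz1 dz1]
  rw [hA22, hB12, hC11, hA0, hA1, hB0, hB1, hC0, hC1]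
  beta_reduce
  rw [e_b, e_a, e_c]
  have hDnePoly : (g11 p * g22 p - g12 p ^ 2) ≠ 0 := by
    have := hDne0; simpa [gdet] using this
  apply mul_left_cancel₀ (pow_ne_zero 4 hDnePoly)
  linear_combination (-((g11 p * g22 p - g12 p ^ 2) - (g22 p * pd 0 z p ^ 2 - 2 * g12 p * pd 0 z p * pd 1 z p + g11 p * pd 1 z p ^ 2))) * hP0


end
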